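/- arXiv:1101.4278 — 2 statements merged into one kernel-verified Lean document; each statement's English description precedes it below -/
import Mathlib

section
/- In the ring ℚ[[x]] of formal power series, the power series G(x) = ∑_{i≥0} ε_i x^i is the multiplicative inverse of the power series ∑_{i≥0} (-1)^i (i!)²/(2i+1)! · x^i; that is, G(x) · ∑_{i≥0} (-1)^i (i!)²/(2i+1)! · x^i = 1. -/
/-!
Work in the variable `y = x²`. With `W = 2 (cosh √y - 1) = 4 sinh² (√y / 2)`, the inner sum in
the defining relation of `ε` is the coefficient of `y ^ l` in `2 ^ i εᵢ Wⁱ`, so that relation says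
exactly `G(W) = sinh √y / √y` for `G = ∑ εᵢ yⁱ`. The series `A = ∑ (-1)ⁱ (i!)² / (2i+1)! yⁱ`
satisfies `y (y + 4) A' + (y + 2) A = 2`; substituting `W` and using `cosh² √y - y (sinh √y / √y)² = 1`
turns this into `2 y E' + E = 1` for `E = (sinh √y / √y) A(W)`, whence `E = 1`. Finally
`W = y + O(y²)` has a compositional inverse, so `f ↦ f(W)` is an injective ring map and `G A = 1`.
-/

open Finset

/-- The defining property of the sequence `ε`: `ε 0 = 1` and for each `l ≥ 1`,
`1/(2l+1)! = ∑_{i=1}^{l} ∑_{j₁+⋯+jᵢ=l, jₜ ≥ 1} 2^i εᵢ / ((2j₁)!⋯(2jᵢ)!)`. -/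
def IsEpsilon (ε : ℕ → ℚ) : Prop :=
  ε 0 = 1 ∧ ∀ l : ℕ, 1 ≤ l →
    (1 : ℚ) / ((2 * l + 1).factorial : ℚ) =
      ∑ i ∈ Finset.Icc 1 l,
        ∑ c ∈ (Fintype.piFinset fun _ : Fin i => Finset.Icc 1 l).filter
            (fun c => ∑ t, c t = l),
          2 ^ i * ε i / ∏ t, ((2 * c t).factorial : ℚ)

namespace PowerSeries

variable {R : Type*}

theorem coeff_pow_eq_sum_compositions [CommSemiring R] {f : R⟦X⟧} (hf : constantCoeff f = 0)
    (k n : ℕ) :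
    coeff n (f ^ k) =
      ∑ c ∈ (Fintype.piFinset fun _ : Fin k => Icc 1 n).filter (fun c => ∑ t, c t = n),
        ∏ t, coeff (c t) f := by
  classical
  have hpi : coeff n (f ^ k) = ∑ c ∈ piAntidiag univ n, ∏ t : Fin k, coeff (c t) f := by
    rw [← Fin.prod_const, coeff_prod, finsuppAntidiag, sum_map]
    exact sum_attach (piAntidiag univ n) fun c => ∏ t : Fin k, coeff (c t) f
  rw [hpi]
  symm
  apply sum_subset
  · intro c hc
    simp only [mem_filter, Fintype.mem_piFinset] at hc
    simp [hc.2]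
  · intro c hc hnot
    obtain ⟨t, ht⟩ : ∃ t, c t = 0 := by
      by_contra! hpos
      refine hnot (mem_filter.2 ⟨Fintype.mem_piFinset.2 fun t => mem_Icc.2
        ⟨Nat.one_le_iff_ne_zero.2 (hpos t), ?_⟩, (mem_piAntidiag.1 hc).1⟩)
      rw [← (mem_piAntidiag.1 hc).1]
      exact single_le_sum (fun _ _ => Nat.zero_le _) (mem_univ t)
    exact prod_eq_zero (mem_univ t) (by rw [ht, coeff_zero_eq_constantCoeff_apply, hf])

theorem coeff_pow_eq_zero_of_lt [CommSemiring R] {f : R⟦X⟧} (hf : constantCoeff f = 0)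
    {k n : ℕ} (h : n < k) : coeff n (f ^ k) = 0 :=
  X_pow_dvd_iff.1 (pow_dvd_pow_of_dvd (X_dvd_iff.2 hf) k) n h

theorem coeff_X_mul_derivative [CommSemiring R] (f : R⟦X⟧) (n : ℕ) :
    coeff n (X * d⁄dX R f) = n * coeff n f := by
  rcases n with _ | n
  · simp
  · rw [coeff_succ_X_mul, coeff_derivative, mul_comm, Nat.cast_succ]

theorem coeff_subst_eq_sum_range [CommRing R] {f P : R⟦X⟧} (hP : constantCoeff P = 0)
    (n : ℕ) :
    coeff n (f.subst P) = ∑ d ∈ range (n + 1), coeff d f * coeff n (P ^ d) := by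
  rw [coeff_subst' (HasSubst.of_constantCoeff_zero' hP)]
  refine finsum_eq_sum_of_support_subset _ fun d hd => ?_
  by_contra hdn
  simp only [coe_range, Set.mem_Iio, not_lt] at hdn
  exact hd (by simp only [coeff_pow_eq_zero_of_lt hP (show n < d by omega), smul_zero])

theorem subst_injective [CommRing R] {P : R⟦X⟧} (hP : constantCoeff P = 0)
    (hP' : IsUnit (coeff 1 P)) : Function.Injective fun f : R⟦X⟧ => f.subst P := by
  intro f g hfg
  have key : ∀ f : R⟦X⟧, subst (P.substInvOfIsUnit hP') (f.subst P) = f := fun f => by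
    rw [subst_comp_subst_apply (HasSubst.of_constantCoeff_zero' hP)
      (HasSubst.substInvOfIsUnit P hP'), subst_substInvOfIsUnit_right P hP hP', X_subst]
  rw [← key f, ← key g]
  exact congrArg _ hfg

theorem eq_one_of_two_mul_X_mul_derivative_add_self {K : Type*} [Field K] [CharZero K]
    {f : K⟦X⟧} (h : 2 * X * d⁄dX K f + f = 1) : f = 1 := by
  ext n
  have hn := congrArg (coeff n) h
  rw [mul_assoc, ← map_ofNat C 2, map_add, coeff_C_mul, coeff_X_mul_derivative] at hn
  rcases n with _ | n
  · simpa using hn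
  · rw [coeff_one, if_neg n.succ_ne_zero] at hn ⊢
    have hne : (2 * (n + 1 : ℕ) + 1 : K) ≠ 0 := by exact_mod_cast (2 * (n + 1)).succ_ne_zero
    exact (mul_eq_zero.1 (by linear_combination hn)).resolve_left hne

end PowerSeries

open PowerSeries

noncomputable def coshSqrt : ℚ⟦X⟧ := mk fun n => 1 / (2 * n).factorial

noncomputable def sinhSqrtDivSqrt : ℚ⟦X⟧ := mk fun n => 1 / (2 * n + 1).factorial

noncomputable def fourSinhSqHalf : ℚ⟦X⟧ := 2 * (coshSqrt - 1)

/-- `A (4 t²) = arsinh t / (t √(1 + t²))`. -/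
noncomputable def arcsinhSeries : ℚ⟦X⟧ :=
  mk fun i => (-1 : ℚ) ^ i * ((i.factorial : ℚ) ^ 2 / ((2 * i + 1).factorial : ℚ))

lemma two_mul_derivative_coshSqrt : 2 * d⁄dX ℚ coshSqrt = sinhSqrtDivSqrt := by
  ext n
  rw [← map_ofNat C 2, coeff_C_mul, coeff_derivative, coshSqrt, sinhSqrtDivSqrt, coeff_mk,
    coeff_mk, show 2 * (n + 1) = 2 * n + 1 + 1 by ring, Nat.factorial_succ]
  push_cast
  field_simp
  ring

lemma two_mul_X_mul_derivative_sinhSqrtDivSqrt :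
    2 * X * d⁄dX ℚ sinhSqrtDivSqrt = coshSqrt - sinhSqrtDivSqrt := by
  ext n
  rw [mul_assoc, ← map_ofNat C 2, coeff_C_mul, map_sub, coshSqrt, sinhSqrtDivSqrt,
    coeff_mk, coeff_mk]
  rcases n with _ | n
  · simp
  · rw [coeff_succ_X_mul, coeff_derivative, coeff_mk, Nat.factorial_succ (2 * (n + 1))]
    push_cast
    field_simp
    ring

lemma coshSqrt_sq_sub_X_mul_sinhSqrtDivSqrt_sq :
    coshSqrt ^ 2 - X * sinhSqrtDivSqrt ^ 2 = 1 := by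
  refine derivative.ext ?_ (by simp [coshSqrt])
  simp only [map_sub, derivative_one, Derivation.leibniz, Derivation.leibniz_pow, derivative_X,
    smul_eq_mul]
  linear_combination coshSqrt * two_mul_derivative_coshSqrt -
    sinhSqrtDivSqrt * two_mul_X_mul_derivative_sinhSqrtDivSqrt

lemma constantCoeff_fourSinhSqHalf : constantCoeff fourSinhSqHalf = 0 := by
  simp [fourSinhSqHalf, coshSqrt]

lemma coeff_fourSinhSqHalf {n : ℕ} (hn : n ≠ 0) :
    coeff n fourSinhSqHalf = 2 / (2 * n).factorial := by
  rw [fourSinhSqHalf, ← map_ofNat C 2, coeff_C_mul, map_sub, coeff_one, if_neg hn, coshSqrt,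
    coeff_mk]
  ring

lemma derivative_fourSinhSqHalf : d⁄dX ℚ fourSinhSqHalf = sinhSqrtDivSqrt := by
  rw [← two_mul_derivative_coshSqrt, fourSinhSqHalf, ← map_ofNat C 2]
  simp

lemma fourSinhSqHalf_mul_add_four :
    fourSinhSqHalf * (fourSinhSqHalf + 4) = 4 * X * sinhSqrtDivSqrt ^ 2 := by
  rw [fourSinhSqHalf]
  linear_combination 4 * coshSqrt_sq_sub_X_mul_sinhSqrtDivSqrt_sq

lemma coeff_succ_arcsinhSeries (n : ℕ) :
    (4 * n + 6) * coeff (n + 1) arcsinhSeries = -(n + 1) * coeff n arcsinhSeries := by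
  rw [arcsinhSeries, coeff_mk, coeff_mk, show 2 * (n + 1) + 1 = 2 * n + 1 + 1 + 1 by ring,
    Nat.factorial_succ, Nat.factorial_succ, Nat.factorial_succ]
  push_cast
  field_simp
  ring

lemma arcsinhSeries_ode :
    X * (X + 4) * d⁄dX ℚ arcsinhSeries + (X + 2) * arcsinhSeries = 2 := by
  ext n
  rcases n with _ | n
  · simp [arcsinhSeries]
  · rw [show X * (X + 4) * d⁄dX ℚ arcsinhSeries + (X + 2) * arcsinhSeries =
      X * (X * d⁄dX ℚ arcsinhSeries + arcsinhSeries) + 4 * (X * d⁄dX ℚ arcsinhSeries) +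
        2 * arcsinhSeries by ring]
    rw [← map_ofNat C 4, ← map_ofNat C 2, map_add, map_add, coeff_C_mul, coeff_C_mul,
      coeff_X_mul_derivative, coeff_succ_X_mul, map_add, coeff_X_mul_derivative,
      coeff_C, if_neg n.succ_ne_zero]
    push_cast
    linear_combination coeff_succ_arcsinhSeries n

lemma sinhSqrtDivSqrt_mul_subst_arcsinhSeries :
    sinhSqrtDivSqrt * arcsinhSeries.subst fourSinhSqHalf = 1 := by
  have hW := HasSubst.of_constantCoeff_zero' constantCoeff_fourSinhSqHalf
  set D := arcsinhSeries.subst fourSinhSqHalf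
  set D' := (d⁄dX ℚ arcsinhSeries).subst fourSinhSqHalf
  have chain : d⁄dX ℚ D = D' * sinhSqrtDivSqrt := by
    rw [derivative_subst hW, derivative_fourSinhSqHalf]
  have ode : fourSinhSqHalf * (fourSinhSqHalf + 4) * D' + (fourSinhSqHalf + 2) * D = 2 := by
    have h := congrArg (substAlgHom hW) arcsinhSeries_ode
    simp only [map_add, map_mul, map_ofNat, substAlgHom_X, coe_substAlgHom] at h
    exact h
  apply eq_one_of_two_mul_X_mul_derivative_add_self
  have two_ne_zero : (2 : ℚ⟦X⟧) ≠ 0 := by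
    rw [← map_ofNat C 2, ← map_zero C]
    exact C_injective.ne two_ne_zero
  refine mul_left_cancel₀ two_ne_zero ?_
  rw [Derivation.leibniz, smul_eq_mul, smul_eq_mul, chain]
  rw [fourSinhSqHalf_mul_add_four, fourSinhSqHalf] at ode
  linear_combination 2 * D * two_mul_X_mul_derivative_sinhSqrtDivSqrt + ode

lemma subst_fourSinhSqHalf_of_isEpsilon {ε : ℕ → ℚ} (hε : IsEpsilon ε) :
    (mk ε).subst fourSinhSqHalf = sinhSqrtDivSqrt := by
  obtain ⟨h0, h1⟩ := hε
  ext l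
  rw [coeff_subst_eq_sum_range constantCoeff_fourSinhSqHalf, sinhSqrtDivSqrt, coeff_mk]
  rcases Nat.eq_zero_or_pos l with rfl | hl
  · simp [h0]
  have h_icc : Icc 1 l ⊆ range (l + 1) := fun i hi => by
    simp only [mem_Icc, mem_range] at hi ⊢
    omega
  rw [h1 l hl, ← sum_subset h_icc fun i hi_range hi => ?_]
  · refine sum_congr rfl fun i _ => ?_
    rw [coeff_mk, coeff_pow_eq_sum_compositions constantCoeff_fourSinhSqHalf, mul_sum]
    refine sum_congr rfl fun c hc => ?_
    have hc_ne : ∀ t, c t ≠ 0 := fun t => by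
      have := (Fintype.mem_piFinset.1 (mem_filter.1 hc).1) t
      simp only [mem_Icc] at this
      omega
    rw [prod_congr rfl fun t _ => coeff_fourSinhSqHalf (hc_ne t), prod_div_distrib, prod_const,
      card_univ, Fintype.card_fin]
    ring
  · obtain rfl : i = 0 := by simp only [mem_Icc, mem_range, not_and, not_le] at hi hi_range; omega
    rw [pow_zero, coeff_one, if_neg hl.ne', mul_zero]

theorem epsilon_series_mul_inverse (ε : ℕ → ℚ) (hε : IsEpsilon ε) :
    (PowerSeries.mk fun i => ε i) *
        (PowerSeries.mk fun i =>
          (-1 : ℚ) ^ i * ((i.factorial : ℚ) ^ 2 / ((2 * i + 1).factorial : ℚ))) = 1 := by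
  have hW := HasSubst.of_constantCoeff_zero' constantCoeff_fourSinhSqHalf
  have h_unit : IsUnit (coeff 1 fourSinhSqHalf) := by
    rw [coeff_fourSinhSqHalf one_ne_zero]
    norm_num
  apply subst_injective constantCoeff_fourSinhSqHalf h_unit
  change (mk ε * arcsinhSeries).subst fourSinhSqHalf = (1 : ℚ⟦X⟧).subst fourSinhSqHalf
  rw [subst_mul hW, subst_fourSinhSqHalf_of_isEpsilon hε,
    sinhSqrtDivSqrt_mul_subst_arcsinhSeries, ← coe_substAlgHom hW, map_one]
end

section
/- Let p be an odd prime, let n_1, …, n_m be positive integers, and let l = n_1 + ⋯ + n_m. Then v_p((n_1!)²⋯(n_m!)² / ((2n_1+1)!⋯(2n_m+1)!)) ≥ −2l/(p−1), as an inequality of rational numbers, and equality holds if and only if n_i = (p−1)/2 for every i = 1, …, m. -/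
/-! By Legendre's formula `(p - 1) v_p(k!) = k - s_p(k)`, where `s_p` is the base-`p` digit sum,
`(p - 1) v_p(n!² / (2n+1)!) + 2n = (s_p(2n+1) - 1) + 2 (n - s_p(n))`, and both brackets are
nonnegative. They vanish exactly when `n < p` and `2n + 1` is a power of `p`, which for `n ≥ 1`
means `2n + 1 = p`. Since the valuation of the product is the sum of the valuations of the
factors, the theorem follows factor by factor. -/

open Nat

namespace Nat

theorem digits_sum_eq_self_iff {b n : ℕ} (hb : 1 < b) : (b.digits n).sum = n ↔ n < b := by
  refine ⟨fun h => ?_, fun h => ?_⟩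
  · by_contra! hbn
    have hq : 1 ≤ n / b := (Nat.one_le_div_iff (by omega)).2 hbn
    have hsum : (b.digits n).sum = n % b + (b.digits (n / b)).sum := by
      rw [digits_def' hb (by omega), List.sum_cons]
    have := digit_sum_le b (n / b)
    have := Nat.div_add_mod n b
    have : n / b < b * (n / b) := by nlinarith
    omega
  · rcases Nat.eq_zero_or_pos n with rfl | hn
    · simp
    · simp [digits_of_lt b n hn.ne' h]

theorem digits_sum_pos {b n : ℕ} (hn : n ≠ 0) : 0 < (b.digits n).sum := by
  have hne : b.digits n ≠ [] := digits_ne_nil_iff_ne_zero.2 hn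
  exact (pos_iff_ne_zero.2 (getLast_digit_ne_zero b hn)).trans_le
    (List.le_sum_of_mem (List.getLast_mem hne))

theorem digits_sum_eq_one_iff {b n : ℕ} (hb : 1 < b) :
    (b.digits n).sum = 1 ↔ ∃ k, n = b ^ k := by
  refine ⟨fun h => ?_, fun ⟨k, hk⟩ => ?_⟩
  · induction n using Nat.strong_induction_on with
    | _ n ih =>
      rcases Nat.eq_zero_or_pos n with rfl | hn
      · simp at h
      rw [digits_def' hb hn, List.sum_cons] at h
      have hdiv := Nat.div_add_mod n b
      by_cases hq : n / b = 0
      · exact ⟨0, by simp_all⟩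
      · have := digits_sum_pos (b := b) hq
        obtain ⟨k, hk⟩ := ih (n / b) (div_lt_self hn hb) (by omega)
        exact ⟨k + 1, by rw [pow_succ', ← hk]; omega⟩
  · simpa [hk, digits_of_lt b 1 one_ne_zero hb] using
      congrArg List.sum (digits_base_pow_mul (k := k) hb one_pos)

end Nat

theorem lt_and_two_mul_add_one_eq_pow_iff {p n : ℕ} (hp : p.Prime) (hn : 1 ≤ n) :
    (n < p ∧ ∃ k, 2 * n + 1 = p ^ k) ↔ n = (p - 1) / 2 := by
  have h2 := hp.two_le
  constructor
  · rintro ⟨hnp, k, hk⟩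
    match k, hk with
    | 0, hk => rw [pow_zero] at hk; omega
    | 1, hk => rw [pow_one] at hk; omega
    | k + 2, hk =>
      have : p * p ≤ p ^ (k + 2) := by
        rw [← pow_two]; exact Nat.pow_le_pow_right hp.pos (by omega)
      nlinarith
  · rintro rfl
    have hodd : p % 2 = 1 := by
      rcases hp.eq_two_or_odd with rfl | h
      · omega
      · exact h
    exact ⟨by omega, 1, by rw [pow_one]; omega⟩

theorem padicValRat.prod {p : ℕ} [Fact p.Prime] {ι : Type*} (s : Finset ι) {q : ι → ℚ}
    (hq : ∀ i ∈ s, q i ≠ 0) : padicValRat p (∏ i ∈ s, q i) = ∑ i ∈ s, padicValRat p (q i) := by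
  classical
  induction s using Finset.induction_on with
  | empty => simp
  | insert a s ha ih =>
    rw [Finset.prod_insert ha, Finset.sum_insert ha, padicValRat.mul (hq a (by simp))
      (Finset.prod_ne_zero_iff.2 fun i hi => hq i (by simp [hi])), ih fun i hi => hq i (by simp [hi])]

section

variable {p : ℕ} [hp : Fact p.Prime]

theorem sub_one_mul_padicValRat_factorial_sq_div_add (n : ℕ) :
    ((p : ℤ) - 1) * padicValRat p ((n ! : ℚ) ^ 2 / (2 * n + 1)!) + 2 * n =
      ((p.digits (2 * n + 1)).sum - 1) + 2 * (n - (p.digits n).sum) := by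
  have legendre (k : ℕ) : ((p : ℤ) - 1) * padicValRat p (k ! : ℚ) = k - (p.digits k).sum := by
    have h := congrArg (Nat.cast (R := ℤ)) (sub_one_mul_padicValNat_factorial (p := p) k)
    rwa [Nat.cast_mul, Nat.cast_sub hp.out.one_le, Nat.cast_sub (digit_sum_le p k),
      Nat.cast_one, ← padicValRat.of_nat] at h
  rw [padicValRat.div (by positivity) (by positivity), padicValRat.pow]
  have h := legendre (2 * n + 1)
  simp only [Nat.cast_add, Nat.cast_mul, Nat.cast_ofNat, Nat.cast_one] at h
  linear_combination 2 * legendre n - h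

theorem neg_div_sub_one_le_padicValRat_factorial_sq_div (n : ℕ) :
    -(2 * (n : ℚ) / ((p : ℚ) - 1)) ≤ padicValRat p ((n ! : ℚ) ^ 2 / (2 * n + 1)!) := by
  set v := padicValRat p ((n ! : ℚ) ^ 2 / (2 * n + 1)!)
  have hdefect : (0 : ℤ) ≤ ((p : ℤ) - 1) * v + 2 * n := by
    have := digits_sum_pos (b := p) (by omega : 2 * n + 1 ≠ 0)
    have := digit_sum_le p n
    rw [sub_one_mul_padicValRat_factorial_sq_div_add]
    omega
  have hp1 : (1 : ℚ) < p := by exact_mod_cast hp.out.one_lt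
  have : (0 : ℚ) ≤ ((p : ℚ) - 1) * v + 2 * n := by exact_mod_cast hdefect
  rw [← neg_div, div_le_iff₀ (by linarith)]
  linarith

theorem padicValRat_factorial_sq_div_eq_iff {n : ℕ} (hn : 1 ≤ n) :
    (padicValRat p ((n ! : ℚ) ^ 2 / (2 * n + 1)!) : ℚ) = -(2 * (n : ℚ) / ((p : ℚ) - 1)) ↔
      n = (p - 1) / 2 := by
  set v := padicValRat p ((n ! : ℚ) ^ 2 / (2 * n + 1)!)
  have hdefect : ((p : ℤ) - 1) * v + 2 * n = 0 ↔
      (p.digits n).sum = n ∧ (p.digits (2 * n + 1)).sum = 1 := by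
    have := digits_sum_pos (b := p) (by omega : 2 * n + 1 ≠ 0)
    have := digit_sum_le p n
    rw [sub_one_mul_padicValRat_factorial_sq_div_add]
    omega
  have hp1 : (1 : ℚ) < p := by exact_mod_cast hp.out.one_lt
  rw [← lt_and_two_mul_add_one_eq_pow_iff hp.out hn, ← digits_sum_eq_self_iff hp.out.one_lt,
    ← digits_sum_eq_one_iff hp.out.one_lt, ← hdefect, ← neg_div, eq_div_iff (by linarith),
    ← (Int.cast_injective (α := ℚ)).eq_iff]
  push_cast
  constructor <;> intro h <;> linarith

end

theorem padicValRat_prod_factorial_sq_div_ge_general (p : ℕ) (hp : p.Prime)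
    (m : ℕ) (n : Fin m → ℕ) (hn : ∀ i, 1 ≤ n i) (l : ℕ) (hl : l = ∑ i, n i) :
    -(2 * (l : ℚ) / ((p : ℚ) - 1)) ≤
        ((padicValRat p
            ((∏ i, ((n i).factorial : ℚ) ^ 2) / ∏ i, ((2 * n i + 1).factorial : ℚ)) : ℚ)) ∧
      (((padicValRat p
            ((∏ i, ((n i).factorial : ℚ) ^ 2) / ∏ i, ((2 * n i + 1).factorial : ℚ)) : ℚ)) =
          -(2 * (l : ℚ) / ((p : ℚ) - 1)) ↔ ∀ i, n i = (p - 1) / 2) := by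
  have := Fact.mk hp
  have hval : padicValRat p ((∏ i, ((n i)! : ℚ) ^ 2) / ∏ i, ((2 * n i + 1)! : ℚ)) =
      ∑ i, padicValRat p (((n i)! : ℚ) ^ 2 / (2 * n i + 1)!) := by
    rw [← Finset.prod_div_distrib, padicValRat.prod]
    intro i _
    positivity
  have hbound : -(2 * (l : ℚ) / ((p : ℚ) - 1)) = ∑ i, -(2 * (n i : ℚ) / ((p : ℚ) - 1)) := by
    rw [hl, Nat.cast_sum, Finset.mul_sum, Finset.sum_div, Finset.sum_neg_distrib]
  have hle (i : Fin m) := neg_div_sub_one_le_padicValRat_factorial_sq_div (p := p) (n i)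
  rw [hval, hbound, Int.cast_sum]
  refine ⟨Finset.sum_le_sum fun i _ => hle i, ?_⟩
  rw [eq_comm, Finset.sum_eq_sum_iff_of_le fun i _ => hle i]
  simp only [Finset.mem_univ, forall_const]
  exact forall_congr' fun i => eq_comm.trans (padicValRat_factorial_sq_div_eq_iff (hn i))

theorem padicValRat_prod_factorial_sq_div_ge (p : ℕ) (hp : p.Prime) (hodd : p ≠ 2)
    (m : ℕ) (hm : 1 ≤ m) (n : Fin m → ℕ) (hn : ∀ i, 1 ≤ n i) (l : ℕ) (hl : l = ∑ i, n i) :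
    -(2 * (l : ℚ) / ((p : ℚ) - 1)) ≤
        ((padicValRat p
            ((∏ i, ((n i).factorial : ℚ) ^ 2) / ∏ i, ((2 * n i + 1).factorial : ℚ)) : ℚ)) ∧
      (((padicValRat p
            ((∏ i, ((n i).factorial : ℚ) ^ 2) / ∏ i, ((2 * n i + 1).factorial : ℚ)) : ℚ)) =
          -(2 * (l : ℚ) / ((p : ℚ) - 1)) ↔ ∀ i, n i = (p - 1) / 2) :=
  padicValRat_prod_factorial_sq_div_ge_general p hp m n hn l hl
end
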